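/- Let e₁, e₂ ∈ ℂ³ and c ∈ ℂ with c ≠ 0 and c² = (e₁ × e₂) ⬝ (e₁ × e₂), and set N₀ := c⁻¹ • (e₁ × e₂). Then for all ω_u, ω_v ∈ ℂ³ with N₀ ⬝ ω_u = 0 and N₀ ⬝ ω_v = 0: ω_u × e₂ = ω_v × e₁ if and only if N₀ ⬝ (ω_u × e₂) = N₀ ⬝ (ω_v × e₁). (This is the paper's remark that the condition ω ×∧ dx₀ = 0 is equivalent to the symmetry s₁₂ = s₂₁ of the difference of second fundamental forms.) -/

import Mathlib

/-
Write n := e₁ × e₂, so that N₀ = c⁻¹ n and n ⬝ n = c² ≠ 0. All four vectors ω_u, e₂, ω_v, e₁ are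
orthogonal to n, and the cross product of two vectors orthogonal to n is parallel to n: by the
BAC–CAB rule (x × y) × n = (x ⬝ n) y - (y ⬝ n) x = 0, and then
n × (w × n) = (n ⬝ n) w - (w ⬝ n) n recovers w as a multiple of n since n ⬝ n ≠ 0.
Two multiples of n agree iff their components along n agree.
-/

open Matrix

/-- The symmetric bilinear dot product on ℂ³ (not the Hermitian inner product). -/
def dot3 (x y : Fin 3 → ℂ) : ℂ := x 0 * y 0 + x 1 * y 1 + x 2 * y 2

/-- The standard cross product on ℂ³. -/
def cross3 (x y : Fin 3 → ℂ) : Fin 3 → ℂ := crossProduct x y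

lemma dot3_eq_dotProduct (x y : Fin 3 → ℂ) : dot3 x y = x ⬝ᵥ y := by
  simp [dot3, dotProduct, Fin.sum_univ_three]

section CommRing

variable {R : Type*} [CommRing R] {n x y w : Fin 3 → R}

lemma cross_cross_eq_zero_of_dotProduct_eq_zero (hx : n ⬝ᵥ x = 0) (hy : n ⬝ᵥ y = 0) :
    x ⨯₃ y ⨯₃ n = 0 := by
  rw [cross_cross_eq_smul_sub_smul, dotProduct_comm x, dotProduct_comm y, hx, hy,
    zero_smul, zero_smul, sub_zero]

lemma dotProduct_self_smul_eq_of_cross_eq_zero (h : w ⨯₃ n = 0) :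
    (n ⬝ᵥ n) • w = (n ⬝ᵥ w) • n := by
  have expand := cross_cross_eq_smul_sub_smul' n w n
  rwa [h, map_zero, eq_comm, sub_eq_zero, dotProduct_comm w] at expand

lemma dotProduct_self_smul_cross_eq (hx : n ⬝ᵥ x = 0) (hy : n ⬝ᵥ y = 0) :
    (n ⬝ᵥ n) • (x ⨯₃ y) = (n ⬝ᵥ x ⨯₃ y) • n :=
  dotProduct_self_smul_eq_of_cross_eq_zero (cross_cross_eq_zero_of_dotProduct_eq_zero hx hy)

end CommRing

lemma cross_eq_cross_iff_dotProduct_eq {R : Type*} [CommRing R] [IsDomain R]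
    {n x y x' y' : Fin 3 → R} (hn : n ⬝ᵥ n ≠ 0) (hx : n ⬝ᵥ x = 0) (hy : n ⬝ᵥ y = 0)
    (hx' : n ⬝ᵥ x' = 0) (hy' : n ⬝ᵥ y' = 0) :
    x ⨯₃ y = x' ⨯₃ y' ↔ n ⬝ᵥ x ⨯₃ y = n ⬝ᵥ x' ⨯₃ y' := by
  refine ⟨fun h => h ▸ rfl, fun h => smul_right_injective _ hn ?_⟩
  simp only [dotProduct_self_smul_cross_eq hx hy, dotProduct_self_smul_cross_eq hx' hy', h]

/-- For tangential ω_u, ω_v, the condition ω ×∧ dx₀ = 0 is equivalent to the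
symmetry s₁₂ = s₂₁ of the difference of second fundamental forms. -/
theorem cross_wedge_symm_iff (e₁ e₂ : Fin 3 → ℂ) (c : ℂ) (hc : c ≠ 0)
    (hc2 : c ^ 2 = dot3 (cross3 e₁ e₂) (cross3 e₁ e₂))
    (N₀ : Fin 3 → ℂ) (hN₀ : N₀ = c⁻¹ • cross3 e₁ e₂) :
    ∀ ωu ωv : Fin 3 → ℂ, dot3 N₀ ωu = 0 → dot3 N₀ ωv = 0 →
      (cross3 ωu e₂ = cross3 ωv e₁ ↔
        dot3 N₀ (cross3 ωu e₂) = dot3 N₀ (cross3 ωv e₁)) := by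
  intro ωu ωv hu hv
  have dot_N₀ (v : Fin 3 → ℂ) : dot3 N₀ v = c⁻¹ * (e₁ ⨯₃ e₂ ⬝ᵥ v) := by
    rw [dot3_eq_dotProduct, hN₀, cross3, smul_dotProduct, smul_eq_mul]
  have hn : e₁ ⨯₃ e₂ ⬝ᵥ e₁ ⨯₃ e₂ ≠ 0 := by
    rw [← dot3_eq_dotProduct, ← cross3, ← hc2]
    exact pow_ne_zero 2 hc
  have he₁ : e₁ ⨯₃ e₂ ⬝ᵥ e₁ = 0 := by rw [dotProduct_comm, dot_self_cross]
  have he₂ : e₁ ⨯₃ e₂ ⬝ᵥ e₂ = 0 := by rw [dotProduct_comm, dot_cross_self]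
  have hc' : c⁻¹ ≠ 0 := inv_ne_zero hc
  rw [dot_N₀, mul_eq_zero, or_iff_right hc'] at hu hv
  simp only [cross3, dot_N₀, mul_right_inj' hc']
  exact cross_eq_cross_iff_dotProduct_eq hn hu he₂ hv he₁
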